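/- arXiv:2204.06482 — 4 statements merged into one kernel-verified Lean document; each statement's English description precedes it below -/
import Mathlib

section
/- Let ℓ ≥ 0, μ ∈ 𝒫_ℓ(ℝ^d), and let ν_i ∈ 𝒫_ℓ(ℝ^d) be such that W_ℓ((1/N)Σ_{i=1}^N ν_i(dx)ν_i(dy), η(dx,dy)) → 0 for some η ∈ 𝒫_ℓ(ℝ^d × ℝ^d) with both marginals equal to μ. Let g : ℝ^d → ℝ be μ-almost everywhere continuous with |g(x)| ≤ C(1+|x|^{ℓ/2}) for some C < ∞. Then ∬ g(x)g(y) η(dx,dy) ≥ (∫ g(x) μ(dx))²; consequently ∫ g(x)² μ(dx) − ∬ g(x)g(y) η(dx,dy) ≤ ∫ g(x)² μ(dx) − (∫ g(x) μ(dx))². -/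
open MeasureTheory ProbabilityTheory Filter ENNReal Topology

noncomputable section

/-- `ℝ^d` with the Euclidean norm. -/
abbrev Euc (d : ℕ) := EuclideanSpace ℝ (Fin d)

namespace Paper

variable {E : Type*} [MeasurableSpace E]

/-- The set of couplings between two measures. -/
def couplings (μ ν : Measure E) : Set (Measure (E × E)) :=
  {ρ | IsProbabilityMeasure ρ ∧ ρ.map Prod.fst = μ ∧ ρ.map Prod.snd = ν}

/-- The `ℓ`-Wasserstein distance `W_ℓ` (in `ℝ≥0∞`), for `ℓ > 0` with cost `dist^ℓ` and
exponent `1/(ℓ ∨ 1)`, and for `ℓ = 0` with cost `1 ∧ dist`. -/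
def Wl [PseudoMetricSpace E] (ℓ : ℝ) (μ ν : Measure E) : ℝ≥0∞ :=
  ⨅ ρ ∈ couplings μ ν,
    if ℓ = 0 then ∫⁻ p, ENNReal.ofReal (min 1 (dist p.1 p.2)) ∂ρ
    else (∫⁻ p, ENNReal.ofReal (dist p.1 p.2 ^ ℓ) ∂ρ) ^ (1 / max ℓ 1)

variable [NormedAddCommGroup E]

/-- Membership in the Wasserstein space `𝒫_ℓ`. -/
def MemP (ℓ : ℝ) (μ : Measure E) : Prop :=
  IsProbabilityMeasure μ ∧ ∫⁻ x, ENNReal.ofReal (‖x‖ ^ ℓ) ∂μ < ⊤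

/-- The `W_ℓ`-ball of radius `r` centered at `μ`, inside `𝒫_ℓ`. -/
def ball (ℓ : ℝ) (μ : Measure E) (r : ℝ) : Set (Measure E) :=
  {m | MemP ℓ m ∧ Wl ℓ m μ < ENNReal.ofReal r}

/-- The average `(1/N) ∑_{i=1}^N ν_i` (indexing `ν 0 = ν_1`). -/
def avg (ν : ℕ → Measure E) (N : ℕ) : Measure E :=
  (N : ℝ≥0∞)⁻¹ • ∑ i ∈ Finset.range N, ν i

/-- The empirical measure `μ_N = (1/N) ∑_{i=1}^N δ_{X_i}` (indexing `X 0 = X_1`). -/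
def emp {Ω : Type*} (X : ℕ → Ω → E) (N : ℕ) (ω : Ω) : Measure E :=
  (N : ℝ≥0∞)⁻¹ • ∑ i ∈ Finset.range N, Measure.dirac (X i ω)

/-- Condition TX: there is `β ∈ (0,1)` with
`∑_{i≥1} (1/i) E((|X_i|^ℓ - i^β) 1_{|X_i|^ℓ > i^β}) < ∞` (indexing `X 0 = X_1`). -/
def TX {Ω : Type*} [MeasurableSpace Ω] (Pr : Measure Ω) (X : ℕ → Ω → E) (ℓ : ℝ) : Prop :=
  ∃ β ∈ Set.Ioo (0:ℝ) 1,
    (∑' i : ℕ, ((i : ℝ≥0∞) + 1)⁻¹ *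
      ∫⁻ ω in {ω | ((i : ℝ) + 1) ^ β < ‖X i ω‖ ^ ℓ},
        ENNReal.ofReal (‖X i ω‖ ^ ℓ - ((i : ℝ) + 1) ^ β) ∂Pr) < ⊤

/-- The total variation measure `|μ - ν|` of the difference of two (finite) measures. -/
def mdiff (μ ν : Measure E) : Measure E := (μ - ν) + (ν - μ)

/-- The norm `‖μ - ν‖_ℓ = sup {∫ f d(μ-ν) : f measurable, |f| ≤ 1 + |x|^ℓ}`. -/
def normLdiff (ℓ : ℝ) (μ ν : Measure E) : ℝ :=
  sSup {c | ∃ f : E → ℝ, Measurable f ∧ (∀ x, |f x| ≤ 1 + ‖x‖ ^ ℓ) ∧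
    c = ∫ x, f x ∂μ - ∫ x, f x ∂ν}

/-- Integral of `f` against a signed measure. -/
def sInt (τ : SignedMeasure E) (f : E → ℝ) : ℝ :=
  ∫ x, f x ∂τ.toJordanDecomposition.posPart - ∫ x, f x ∂τ.toJordanDecomposition.negPart

/-- `U` admits `DU` as linear functional derivative at `μ` (on `𝒫_ℓ`). -/
def HasLFDAt (ℓ : ℝ) (U : Measure E → ℝ) (μ : Measure E) (DU : E → ℝ) : Prop :=
  Measurable DU ∧ (∃ C : ℝ, ∀ y, |DU y| ≤ C * (1 + ‖y‖ ^ ℓ)) ∧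
    ∀ ν : Measure E, MemP ℓ ν →
      HasDerivWithinAt (fun ε : ℝ => U (ENNReal.ofReal (1 - ε) • μ + ENNReal.ofReal ε • ν))
        ((∫ y, DU y ∂ν) - ∫ y, DU y ∂μ) (Set.Ici 0) 0

/-- RU1: `U` admits a linear functional derivative `DU m` at every `m` in the ball `B(μ,r)`. -/
def RU1 (ℓ r : ℝ) (U : Measure E → ℝ) (μ : Measure E) (DU : Measure E → E → ℝ) : Prop :=
  ∀ m ∈ ball ℓ μ r, HasLFDAt ℓ U m (DU m)

/-- RU2: uniform growth bound `|δU/δm(m,x)| ≤ C (1+|x|^{ℓ/2})` on the ball. -/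
def RU2 (ℓ r : ℝ) (μ : Measure E) (DU : Measure E → E → ℝ) : Prop :=
  ∃ C : ℝ, ∀ m ∈ ball ℓ μ r, ∀ x, |DU m x| ≤ C * (1 + ‖x‖ ^ (ℓ / 2))

/-- RU3: `sup_x |δU/δm(m,x) - δU/δm(μ,x)|/(1+|x|^{ℓ/2}) → 0` as `W_ℓ(m,μ) → 0`. -/
def RU3 (ℓ r : ℝ) (μ : Measure E) (DU : Measure E → E → ℝ) : Prop :=
  ∀ ε > (0:ℝ), ∃ δ > (0:ℝ), ∀ m ∈ ball ℓ μ r, Wl ℓ m μ < ENNReal.ofReal δ →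
    ∀ x, |DU m x - DU μ x| ≤ ε * (1 + ‖x‖ ^ (ℓ / 2))

/-- RU4: `x ↦ δU/δm(μ,x)` is continuous `μ`-a.e. -/
def RU4 (μ : Measure E) (DU : Measure E → E → ℝ) : Prop :=
  ∀ᵐ x ∂μ, ContinuousAt (DU μ) x

/-- RU5 (with exponent `α`): Hölder-type stability of the derivative on the ball. -/
def RU5 (ℓ α r : ℝ) (μ : Measure E) (DU : Measure E → E → ℝ) : Prop :=
  ∃ C : ℝ, ∀ m₁ ∈ ball ℓ μ r, ∀ m₂ ∈ ball ℓ μ r, ∀ x,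
    |DU m₂ x - DU m₁ x| ≤
      C * ((1 + ‖x‖ ^ ℓ) * (((mdiff m₂ m₁) Set.univ).toReal) ^ α +
        (1 + ‖x‖ ^ (ℓ * (1 - α))) * (∫ y, ‖y‖ ^ ℓ ∂(mdiff m₂ m₁)) ^ α)

/-- RU6 (with exponent `α`): Hölder-type stability of the derivative on the ball. -/
def RU6 (ℓ α r : ℝ) (μ : Measure E) (DU : Measure E → E → ℝ) : Prop :=
  ∃ C : ℝ, ∀ m₁ ∈ ball ℓ μ r, ∀ m₂ ∈ ball ℓ μ r, ∀ x,
    |DU m₂ x - DU m₁ x| ≤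
      C * (∫ y, (1 + ‖y‖ ^ (ℓ / (2 * α))) ∂(mdiff m₂ m₁)) ^ α * (1 + ‖x‖ ^ (ℓ / 2))

/-- Lyapunov condition L1: `PV(x) ≤ γ V(x) + K`. -/
def Lyap1 (P : Kernel E E) (V : E → ℝ) (γ K : ℝ) : Prop :=
  ∀ x, ∫⁻ y, ENNReal.ofReal (V y) ∂(P x) ≤ ENNReal.ofReal (γ * V x + K)

/-- Lyapunov minorization condition: `(P(x,·) ∧ P(y,·))(ℝ^d) ≥ ρ` when `V(x)+V(y) ≤ R`. -/
def Lyap2 (P : Kernel E E) (V : E → ℝ) (R ρ : ℝ) : Prop :=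
  ∀ x y, V x + V y ≤ R → ENNReal.ofReal ρ ≤ (P x ⊓ P y) Set.univ

/-- The full Lyapunov condition with data `(V, γ, K, R, ρ)`. -/
def Lyapunov (P : Kernel E E) (V : E → ℝ) (γ K R ρ : ℝ) : Prop :=
  Measurable V ∧ (∀ x, 0 ≤ V x) ∧ γ ∈ Set.Ioo (0:ℝ) 1 ∧ 0 ≤ K ∧
    2 * K / (1 - γ) < R ∧ ρ ∈ Set.Ioc (0:ℝ) 1 ∧ Lyap1 P V γ K ∧ Lyap2 P V R ρ

/-- `n` steps of the kernel `P` starting from the measure `σ`, i.e. `σ Pⁿ`. -/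
def kIter (P : Kernel E E) (σ : Measure E) : ℕ → Measure E
  | 0 => σ
  | n + 1 => (kIter P σ n).bind (⇑P)

/-- `Pⁿ f (x)`. -/
def Pn (P : Kernel E E) (n : ℕ) (f : E → ℝ) (x : E) : ℝ :=
  ∫ y, f y ∂(kIter P (Measure.dirac x) n)

/-- The contraction factor `χ(ρ,β,γ,K,R)`. -/
def chi (ρ β γ K R : ℝ) : ℝ :=
  max (1 - ρ + β * K) ((2 + β * γ * R + 2 * β * K) / (2 + β * R))

/-- The distance `d_{V,β}(θ,σ) = sup {|θ(φ) - σ(φ)| : ‖φ‖_{V,β} ≤ 1}`. -/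
def dV (V : E → ℝ) (β : ℝ) (θ σ' : Measure E) : ℝ :=
  sSup {c | ∃ φ : E → ℝ, Measurable φ ∧ (∀ x, |φ x| ≤ 1 + β * V x) ∧
    c = |(∫ x, φ x ∂θ) - ∫ x, φ x ∂σ'|}

/-- `(X_i)_{i ≥ 1}` (indexed so that `X 0 = X_1`) is a Markov chain with initial law `ν₁`
and transition kernel `P` on the probability space `(Ω, Pr)`. -/
def IsMarkovChain {Ω : Type*} [MeasurableSpace Ω] (Pr : Measure Ω) (X : ℕ → Ω → E)
    (ν₁ : Measure E) (P : Kernel E E) : Prop :=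
  (∀ i, Measurable (X i)) ∧ Pr.map (X 0) = ν₁ ∧
    ∀ i : ℕ, ∀ A : Set E, MeasurableSet A →
      (fun ω => ((P (X i ω)) A).toReal) =ᵐ[Pr]
        Pr[fun ω => Set.indicator A (fun _ => (1:ℝ)) (X (i + 1) ω) |
          MeasurableSpace.comap (fun ω (j : Fin (i + 1)) => X j.1 ω) MeasurableSpace.pi]

/-- Convergence in distribution of the real random variables `Y N` to the law `G`. -/
def cid {Ω : Type*} [MeasurableSpace Ω] (Pr : Measure Ω) (Y : ℕ → Ω → ℝ) (G : Measure ℝ) : Prop :=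
  ∀ f : BoundedContinuousFunction ℝ ℝ,
    Tendsto (fun N => ∫ ω, f (Y N ω) ∂Pr) atTop (𝓝 (∫ x, f x ∂G))

end Paper

open Paper

/-!
Averaging product measures gives `∫ f(x) f(y) d((1/N) ∑ νᵢ ⊗ νᵢ) = (1/N) ∑ (∫ f dνᵢ)² ≥ 0`,
and `W_ℓ`-convergence carries this to `η` for every continuous compactly supported `f`. As `η`
has both marginals `μ`, the quadratic form `f ↦ ∫ f(x) f(y) dη(x, y)` is the inner product of
the two coordinate pullbacks of `f` in `L²(η)`, hence continuous on `L²(μ)`; by density of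
compactly supported continuous functions it is nonnegative on all of `L²(μ)`. The growth bound
puts `g` in `L²(μ)`, and the form evaluated at `g - ∫ g dμ` is `∫ g(x) g(y) dη - (∫ g dμ)²`.
-/

lemma HasCompactSupport.mul_prod {X Y R : Type*} [TopologicalSpace X] [TopologicalSpace Y]
    [MulZeroClass R] {f : X → R} {g : Y → R} (hf : HasCompactSupport f)
    (hg : HasCompactSupport g) : HasCompactSupport fun p : X × Y => f p.1 * g p.2 := by
  refine .intro' (hf.prod hg) ((isClosed_tsupport f).prod (isClosed_tsupport g)) fun p hp => ?_
  rcases not_and_or.mp hp with h | h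
  · rw [image_eq_zero_of_notMem_tsupport h, zero_mul]
  · rw [image_eq_zero_of_notMem_tsupport h, mul_zero]

lemma measure_le_of_lintegral_lt_mul {α : Type*} [MeasurableSpace α] {ρ : Measure α}
    {A : Set α} (hA : MeasurableSet A) {φ : α → ℝ} {c θ : ℝ} (hc : 0 < c)
    (hφ : ∀ q ∈ A, c ≤ φ q) (h : ∫⁻ q, ENNReal.ofReal (φ q) ∂ρ < ENNReal.ofReal (c * θ)) :
    ρ A ≤ ENNReal.ofReal θ := by
  have markov : ENNReal.ofReal c * ρ A ≤ ∫⁻ q, ENNReal.ofReal (φ q) ∂ρ :=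
    calc ENNReal.ofReal c * ρ A = ∫⁻ _ in A, ENNReal.ofReal c ∂ρ := (setLIntegral_const _ _).symm
      _ ≤ ∫⁻ q in A, ENNReal.ofReal (φ q) ∂ρ :=
        setLIntegral_mono' hA fun q hq => ENNReal.ofReal_le_ofReal (hφ q hq)
      _ ≤ _ := setLIntegral_le_lintegral _ _
  rw [ENNReal.ofReal_mul hc.le] at h
  exact (lt_of_mul_lt_mul_left (markov.trans_lt h) zero_le).le

lemma integral_mul_nonneg_avg_prod_self {E : Type*} [MeasurableSpace E] {ν : ℕ → Measure E}
    [∀ i, SFinite (ν i)] {f : E → ℝ}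
    (hf : ∀ i, Integrable (fun p : E × E => f p.1 * f p.2) ((ν i).prod (ν i))) (N : ℕ) :
    0 ≤ ∫ p, f p.1 * f p.2 ∂((N : ℝ≥0∞)⁻¹ • ∑ i ∈ Finset.range N, (ν i).prod (ν i)) := by
  rw [integral_smul_measure, integral_finsetSum_measure fun i _ => hf i]
  simp_rw [integral_prod_mul]
  exact smul_nonneg ENNReal.toReal_nonneg (Finset.sum_nonneg fun i _ => mul_self_nonneg _)

section CrossIntegral

open scoped InnerProductSpace

variable {X : Type*} [MeasurableSpace X] {μ : Measure X} {η : Measure (X × X)}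

lemma integral_mul_comp_fst_snd_eq_inner (h₁ : MeasurePreserving Prod.fst η μ)
    (h₂ : MeasurePreserving Prod.snd η μ) {h : X → ℝ} (hh : MemLp h 2 μ) :
    ∫ p, h p.1 * h p.2 ∂η = ⟪Lp.compMeasurePreserving Prod.fst h₁ (hh.toLp h),
      Lp.compMeasurePreserving Prod.snd h₂ (hh.toLp h)⟫_ℝ := by
  rw [Lp.toLp_compMeasurePreserving, Lp.toLp_compMeasurePreserving, L2.inner_def]
  refine integral_congr_ae ?_
  filter_upwards [(hh.comp_measurePreserving h₁).coeFn_toLp,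
    (hh.comp_measurePreserving h₂).coeFn_toLp] with p hp₁ hp₂
  rw [hp₁, hp₂, Real.inner_apply, Function.comp_apply, Function.comp_apply]

lemma integral_centered_mul_comp_fst_snd [IsProbabilityMeasure μ]
    (h₁ : MeasurePreserving Prod.fst η μ) (h₂ : MeasurePreserving Prod.snd η μ) {h : X → ℝ}
    (hh : MemLp h 2 μ) :
    ∫ p, (h p.1 - ∫ x, h x ∂μ) * (h p.2 - ∫ x, h x ∂μ) ∂η =
      ∫ p, h p.1 * h p.2 ∂η - (∫ x, h x ∂μ) ^ 2 := by
  have : IsProbabilityMeasure η :=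
    (Measure.isProbabilityMeasure_map_iff measurable_fst.aemeasurable).mp
      (h₁.map_eq ▸ inferInstance)
  have hh₁ := hh.comp_measurePreserving h₁
  have hh₂ := hh.comp_measurePreserving h₂
  have hint₁ : ∫ p, h p.1 ∂η = ∫ x, h x ∂μ := by
    rw [← h₁.map_eq, integral_map measurable_fst.aemeasurable (h₁.map_eq ▸ hh.1)]
  have hint₂ : ∫ p, h p.2 ∂η = ∫ x, h x ∂μ := by
    rw [← h₂.map_eq, integral_map measurable_snd.aemeasurable (h₂.map_eq ▸ hh.1)]
  set a := ∫ x, h x ∂μ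
  have hprod : Integrable (fun p => h p.1 * h p.2) η := hh₁.integrable_mul hh₂
  have hi₁ : Integrable (fun p => h p.1) η := hh₁.integrable one_le_two
  have hi₂ : Integrable (fun p => h p.2) η := hh₂.integrable one_le_two
  simp_rw [sub_mul, mul_sub]
  rw [integral_sub, integral_sub hprod (hi₁.mul_const a),
    integral_sub (hi₂.const_mul a) (integrable_const _), integral_mul_const, integral_const_mul,
    hint₁, hint₂, integral_const]
  · simp only [probReal_univ, one_smul]
    ring
  · exact hprod.sub (hi₁.mul_const a)
  · exact (hi₂.const_mul a).sub (integrable_const _)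

lemma integral_mul_comp_fst_snd_nonneg [TopologicalSpace X] [NormalSpace X] [R1Space X]
    [WeaklyLocallyCompactSpace X] [BorelSpace X] [μ.Regular]
    (h₁ : MeasurePreserving Prod.fst η μ) (h₂ : MeasurePreserving Prod.snd η μ)
    (hcc : ∀ f : X → ℝ, Continuous f → HasCompactSupport f → 0 ≤ ∫ p, f p.1 * f p.2 ∂η)
    {h : X → ℝ} (hh : MemLp h 2 μ) :
    0 ≤ ∫ p, h p.1 * h p.2 ∂η := by
  have hclosed : IsClosed {u : Lp ℝ 2 μ |
      0 ≤ ⟪Lp.compMeasurePreserving Prod.fst h₁ u, Lp.compMeasurePreserving Prod.snd h₂ u⟫_ℝ} :=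
    isClosed_le continuous_const ((Lp.isometry_compMeasurePreserving h₁).continuous.inner
      (Lp.isometry_compMeasurePreserving h₂).continuous)
  rw [integral_mul_comp_fst_snd_eq_inner h₁ h₂ hh]
  refine hclosed.closure_subset (EMetric.mem_closure_iff.mpr fun ε hε => ?_)
  obtain ⟨δ, hδ, hδε⟩ := exists_between hε
  obtain ⟨f, hfc, hfδ, hf, hfL2⟩ :=
    hh.exists_hasCompactSupport_eLpNorm_sub_le ENNReal.ofNat_ne_top hδ.ne'
  refine ⟨hfL2.toLp f, ?_, ?_⟩
  · rw [Set.mem_ofPred_eq, ← integral_mul_comp_fst_snd_eq_inner h₁ h₂ hfL2]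
    exact hcc f hf hfc
  · rw [Lp.edist_toLp_toLp]
    exact hfδ.trans_lt hδε

end CrossIntegral

namespace Paper

lemma MemP.memLp_two_of_abs_le {E : Type*} [MeasurableSpace E] [NormedAddCommGroup E]
    [OpensMeasurableSpace E] {ℓ : ℝ} {μ : Measure E} (hμ : MemP ℓ μ) {g : E → ℝ}
    (hg : AEStronglyMeasurable g μ) {C : ℝ} (hgC : ∀ x, |g x| ≤ C * (1 + ‖x‖ ^ (ℓ / 2))) :
    MemLp g 2 μ := by
  have : IsProbabilityMeasure μ := hμ.1
  have hmeas : AEStronglyMeasurable (fun x : E => ‖x‖ ^ (ℓ / 2)) μ :=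
    (measurable_norm.pow_const _).aestronglyMeasurable
  have hpow : MemLp (fun x : E => ‖x‖ ^ (ℓ / 2)) 2 μ := by
    refine (memLp_two_iff_integrable_sq hmeas).mpr ⟨hmeas.pow 2, ?_⟩
    have hsq : ∀ x : E, (‖x‖ ^ (ℓ / 2)) ^ 2 = ‖x‖ ^ ℓ := fun x => by
      rw [← Real.rpow_mul_natCast (norm_nonneg x)]
      norm_num
    simp_rw [hsq]
    exact (hasFiniteIntegral_iff_ofReal (.of_forall fun x => by positivity)).mpr hμ.2
  have hbound : MemLp (fun x : E => C * (1 + ‖x‖ ^ (ℓ / 2))) 2 μ :=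
    ((memLp_const (1 : ℝ)).add hpow).const_mul C
  refine hbound.of_le hg (.of_forall fun x => ?_)
  rw [Real.norm_eq_abs, Real.norm_eq_abs]
  exact (hgC x).trans (le_abs_self _)

variable {E : Type*} [MeasurableSpace E] [PseudoMetricSpace E] [OpensMeasurableSpace E]
  [SecondCountableTopology E]

lemma eventually_exists_coupling_measure_le {ι : Type*} {l : Filter ι} {ℓ : ℝ} (hℓ : 0 ≤ ℓ)
    {κ : ι → Measure E} {η : Measure E} (hconv : Tendsto (fun i => Wl ℓ (κ i) η) l (𝓝 0))
    {δ θ : ℝ} (hδ : 0 < δ) (hθ : 0 < θ) :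
    ∀ᶠ i in l, ∃ ρ ∈ couplings (κ i) η, ρ {q | δ ≤ dist q.1 q.2} ≤ ENNReal.ofReal θ := by
  have hA : MeasurableSet {q : E × E | δ ≤ dist q.1 q.2} :=
    measurableSet_le measurable_const continuous_dist.measurable
  by_cases hℓ0 : ℓ = 0
  · have ht : (0 : ℝ≥0∞) < ENNReal.ofReal (min 1 δ * θ) := by
      have := lt_min one_pos hδ
      positivity
    filter_upwards [hconv.eventually_lt_const ht] with i hi
    simp only [Wl, if_pos hℓ0, iInf_lt_iff] at hi
    obtain ⟨ρ, hρ, hcost⟩ := hi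
    exact ⟨ρ, hρ, measure_le_of_lintegral_lt_mul hA (lt_min one_pos hδ)
      (fun q hq => min_le_min le_rfl hq) hcost⟩
  · have hm : (0 : ℝ) < max ℓ 1 := lt_max_of_lt_right one_pos
    have ht : (0 : ℝ≥0∞) < ENNReal.ofReal (δ ^ ℓ * θ) ^ (1 / max ℓ 1) := by
      have := Real.rpow_pos_of_pos hδ ℓ
      exact ENNReal.rpow_pos (by positivity) ENNReal.ofReal_ne_top
    filter_upwards [hconv.eventually_lt_const ht] with i hi
    simp only [Wl, if_neg hℓ0, iInf_lt_iff] at hi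
    obtain ⟨ρ, hρ, hcost⟩ := hi
    have hcost' := ENNReal.rpow_lt_rpow hcost hm
    rw [← ENNReal.rpow_mul, ← ENNReal.rpow_mul, one_div_mul_cancel hm.ne', ENNReal.rpow_one,
      ENNReal.rpow_one] at hcost'
    exact ⟨ρ, hρ, measure_le_of_lintegral_lt_mul hA (Real.rpow_pos_of_pos hδ ℓ)
      (fun q hq => Real.rpow_le_rpow hδ.le hq hℓ) hcost'⟩

lemma abs_integral_sub_le_of_coupling {κ η : Measure E} {ρ : Measure (E × E)}
    (hρ : ρ ∈ couplings κ η) {F : E → ℝ} (hF : Continuous F) {M : ℝ} (hM : ∀ x, |F x| ≤ M)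
    {δ c : ℝ} (hc : 0 ≤ c) (hδF : ∀ a b, dist a b < δ → |F a - F b| ≤ c) :
    |∫ x, F x ∂κ - ∫ x, F x ∂η| ≤ c + 2 * M * ρ.real {q | δ ≤ dist q.1 q.2} := by
  obtain ⟨hprob, rfl, rfl⟩ := hρ
  set A : Set (E × E) := {q | δ ≤ dist q.1 q.2}
  have hA : MeasurableSet A := measurableSet_le measurable_const continuous_dist.measurable
  have hint : ∀ {f : E × E → E}, Continuous f → Integrable (fun q => F (f q)) ρ := fun {f} hf =>
    .of_bound (hF.comp hf).aestronglyMeasurable M (.of_forall fun q => hM (f q))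
  have hbound : Integrable (fun q => c + 2 * M * A.indicator (fun _ => (1 : ℝ)) q) ρ :=
    (integrable_const c).add (((integrable_const 1).indicator hA).const_mul _)
  rw [integral_map measurable_fst.aemeasurable hF.aestronglyMeasurable,
    integral_map measurable_snd.aemeasurable hF.aestronglyMeasurable,
    ← integral_sub (hint continuous_fst) (hint continuous_snd)]
  calc |∫ q, (F q.1 - F q.2) ∂ρ| ≤ ∫ q, |F q.1 - F q.2| ∂ρ := abs_integral_le_integral_abs
    _ ≤ ∫ q, (c + 2 * M * A.indicator (fun _ => (1 : ℝ)) q) ∂ρ := by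
        refine integral_mono (hint continuous_fst |>.sub (hint continuous_snd)).abs hbound
          fun q => ?_
        by_cases hq : q ∈ A
        · rw [Set.indicator_of_mem hq]
          have := abs_sub (F q.1) (F q.2)
          linarith [hM q.1, hM q.2]
        · rw [Set.indicator_of_notMem hq]
          simpa using hδF q.1 q.2 (not_le.mp hq)
    _ = c + 2 * M * ρ.real A := by
        rw [integral_add (integrable_const c) (((integrable_const 1).indicator hA).const_mul _),
          integral_const_mul, integral_indicator_const _ hA]
        simp

lemma tendsto_integral_of_tendsto_Wl {ι : Type*} {l : Filter ι} {ℓ : ℝ} (hℓ : 0 ≤ ℓ)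
    {κ : ι → Measure E} {η : Measure E} (hconv : Tendsto (fun i => Wl ℓ (κ i) η) l (𝓝 0))
    {F : E → ℝ} (hF : UniformContinuous F) {M : ℝ} (hM : ∀ x, |F x| ≤ M) :
    Tendsto (fun i => ∫ x, F x ∂(κ i)) l (𝓝 (∫ x, F x ∂η)) := by
  refine Metric.tendsto_nhds.mpr fun ε hε => ?_
  obtain ⟨δ, hδ, hδF⟩ := Metric.uniformContinuous_iff.mp hF (ε / 2) (half_pos hε)
  set θ := ε / (4 * (|M| + 1))
  have hθ : 0 < θ := by positivity
  have hMθ : 2 * |M| * θ < ε / 2 := by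
    have : (|M| + 1) * θ = ε / 4 := by simp only [θ]; field_simp
    linarith
  filter_upwards [eventually_exists_coupling_measure_le hℓ hconv hδ hθ] with i ⟨ρ, hρ, hfar⟩
  have hfar' : ρ.real {q | δ ≤ dist q.1 q.2} ≤ θ := ENNReal.toReal_le_of_le_ofReal hθ.le hfar
  have hclose := abs_integral_sub_le_of_coupling hρ hF.continuous hM (half_pos hε).le
    fun a b hab => (hδF hab).le
  rw [Real.dist_eq]
  calc _ ≤ ε / 2 + 2 * M * ρ.real {q | δ ≤ dist q.1 q.2} := hclose
    _ ≤ ε / 2 + 2 * |M| * ρ.real {q | δ ≤ dist q.1 q.2} := by gcongr; exact le_abs_self M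
    _ ≤ ε / 2 + 2 * |M| * θ := by gcongr
    _ < ε := by linarith

lemma integral_mul_nonneg_of_tendsto_Wl {ℓ : ℝ} (hℓ : 0 ≤ ℓ) {ν : ℕ → Measure E}
    [∀ i, IsProbabilityMeasure (ν i)] {η : Measure (E × E)}
    (hconv : Tendsto
      (fun N : ℕ => Wl ℓ ((N : ℝ≥0∞)⁻¹ • ∑ i ∈ Finset.range N, (ν i).prod (ν i)) η)
      atTop (𝓝 0))
    {f : E → ℝ} (hf : Continuous f) (hfc : HasCompactSupport f) :
    0 ≤ ∫ p, f p.1 * f p.2 ∂η := by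
  have hF : Continuous fun p : E × E => f p.1 * f p.2 := by fun_prop
  obtain ⟨M, hM⟩ := (hfc.mul_prod hfc).exists_bound_of_continuous hF
  refine ge_of_tendsto (tendsto_integral_of_tendsto_Wl hℓ hconv
    ((hfc.mul_prod hfc).uniformContinuous_of_continuous hF) hM) (.of_forall fun N => ?_)
  exact integral_mul_nonneg_avg_prod_self
    (fun i => .of_bound hF.aestronglyMeasurable M (.of_forall hM)) N

end Paper

theorem stmt2_general {d : ℕ} (ℓ : ℝ) (hℓ : 0 ≤ ℓ)
    (μ : Measure (Euc d)) (hμ : MemP ℓ μ)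
    (ν : ℕ → Measure (Euc d)) (hν : ∀ i, MemP ℓ (ν i))
    (η : Measure (Euc d × Euc d))
    (hη1 : η.map Prod.fst = μ) (hη2 : η.map Prod.snd = μ)
    (hconv : Tendsto
      (fun N : ℕ => Wl ℓ ((N : ℝ≥0∞)⁻¹ • ∑ i ∈ Finset.range N, (ν i).prod (ν i)) η)
      atTop (𝓝 0))
    (g : Euc d → ℝ) (hgm : Measurable g)
    (C : ℝ) (hg : ∀ x, |g x| ≤ C * (1 + ‖x‖ ^ (ℓ / 2))) :
    (∫ x, g x ∂μ) ^ 2 ≤ (∫ p, g p.1 * g p.2 ∂η) ∧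
      (∫ x, (g x) ^ 2 ∂μ) - (∫ p, g p.1 * g p.2 ∂η) ≤
        (∫ x, (g x) ^ 2 ∂μ) - (∫ x, g x ∂μ) ^ 2 := by
  have : IsProbabilityMeasure μ := hμ.1
  have : ∀ i, IsProbabilityMeasure (ν i) := fun i => (hν i).1
  have h₁ : MeasurePreserving Prod.fst η μ := ⟨measurable_fst, hη1⟩
  have h₂ : MeasurePreserving Prod.snd η μ := ⟨measurable_snd, hη2⟩
  have hg2 : MemLp g 2 μ := hμ.memLp_two_of_abs_le hgm.aestronglyMeasurable hg
  have hcentered := integral_mul_comp_fst_snd_nonneg h₁ h₂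
    (fun f hf hfc => integral_mul_nonneg_of_tendsto_Wl hℓ hconv hf hfc)
    (hg2.sub (memLp_const (∫ x, g x ∂μ)))
  simp only [Pi.sub_apply] at hcentered
  rw [integral_centered_mul_comp_fst_snd h₁ h₂ hg2] at hcentered
  exact ⟨by linarith, by linarith⟩

/-- variance inequality for the asymptotic variance. -/
theorem stmt2 {d : ℕ} (ℓ : ℝ) (hℓ : 0 ≤ ℓ)
    (μ : Measure (Euc d)) (hμ : MemP ℓ μ)
    (ν : ℕ → Measure (Euc d)) (hν : ∀ i, MemP ℓ (ν i))
    (η : Measure (Euc d × Euc d)) (hη : MemP ℓ η)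
    (hη1 : η.map Prod.fst = μ) (hη2 : η.map Prod.snd = μ)
    (hconv : Tendsto
      (fun N : ℕ => Wl ℓ ((N : ℝ≥0∞)⁻¹ • ∑ i ∈ Finset.range N, (ν i).prod (ν i)) η)
      atTop (𝓝 0))
    (g : Euc d → ℝ) (hgm : Measurable g) (hgc : ∀ᵐ x ∂μ, ContinuousAt g x)
    (C : ℝ) (hg : ∀ x, |g x| ≤ C * (1 + ‖x‖ ^ (ℓ / 2))) :
    (∫ x, g x ∂μ) ^ 2 ≤ (∫ p, g p.1 * g p.2 ∂η) ∧
      (∫ x, (g x) ^ 2 ∂μ) - (∫ p, g p.1 * g p.2 ∂η) ≤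
        (∫ x, (g x) ^ 2 ∂μ) - (∫ x, g x ∂μ) ^ 2 :=
  stmt2_general ℓ hℓ μ hμ ν hν η hη1 hη2 hconv g hgm C hg
end
end

section
/- Let (X_i)_{i≥1} be a Markov chain on ℝ^d with transition kernel P, let V : ℝ^d → [0,∞) be measurable, and let Φ_N = √N(U(μ_N) − U(μ)) where μ_N = (1/N)Σ_{i=1}^N δ_{X_i} and U, μ are fixed. Suppose there is a probability measure 𝒢 on ℝ (not depending on the initial law) such that for every initial law ν₁ with ν₁(V) < ∞, the sequence Φ_N converges in distribution to 𝒢 under the law ℙ_{ν₁} of the chain started from ν₁. Then for every initial probability measure ν₁ on ℝ^d (possibly with ν₁(V) = ∞), Φ_N converges in distribution to 𝒢 under ℙ_{ν₁}. -/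
open MeasureTheory ProbabilityTheory Filter ENNReal Topology

noncomputable section

open Paper

/-! Reweighting the initial law by a bounded density `ρ` reweights the law of the chain by
`ρ(X₀)`, and the chain stays Markov with kernel `P`. Conditioning on `{V(X₀) ≤ K}` gives chains
with `V`-integrable initial law, whose laws differ from `ℙ` by at most `2ℙ(V(X₀) > K)` in total
variation; letting `K → ∞` transfers the convergence in distribution. The transfer needs `Φ_N`
to be a.e.-measurable under `ℙ`: reweighting by `1/(1 + V)` gives an equivalent law with
`V`-integrable initial law, and convergence in distribution forces eventual a.e.-measurability
because integrals of non-measurable functions are junk zeros. -/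

theorem MeasureTheory.ae_eq_condExp_withDensity {Ω : Type*} {m m₀ : MeasurableSpace Ω}
    (hm : m ≤ m₀) {μ : Measure Ω} [IsFiniteMeasure μ] {w : Ω → ℝ≥0∞} (hw : Measurable[m] w)
    {C : ℝ≥0∞} (hC : C ≠ ∞) (hwC : ∀ ω, w ω ≤ C) {f g : Ω → ℝ} (hf : Integrable f μ)
    (hg : StronglyMeasurable[m] g) (hfg : g =ᵐ[μ] μ[f | m]) :
    g =ᵐ[μ.withDensity w] (μ.withDensity w)[f | m] := by
  have hwm : Measurable w := hw.mono hm le_rfl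
  have hle : μ.withDensity w ≤ C • μ := by
    rw [← withDensity_const]
    exact withDensity_mono (ae_of_all _ hwC)
  have hint : ∀ {h : Ω → ℝ}, Integrable h μ → Integrable h (μ.withDensity w) :=
    fun hh => (hh.smul_measure hC).mono_measure hle
  have := μ.smul_finite hC
  have : IsFiniteMeasure (μ.withDensity w) := isFiniteMeasure_of_le _ hle
  have hw_lt_top : ∀ᵐ ω ∂μ, w ω < ∞ := ae_of_all _ fun ω => (hwC ω).trans_lt hC.lt_top
  have hwr : StronglyMeasurable[m] fun ω => (w ω).toReal := hw.ennreal_toReal.stronglyMeasurable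
  have hwf : Integrable (fun ω => (w ω).toReal * f ω) μ :=
    hf.bdd_mul (hwr.mono hm).aestronglyMeasurable (c := C.toReal) (ae_of_all _ fun ω => by
      rw [Real.norm_of_nonneg ENNReal.toReal_nonneg]
      exact ENNReal.toReal_mono hC (hwC ω))
  have hpull := condExp_mul_of_stronglyMeasurable_left hwr hwf hf
  refine ae_eq_condExp_of_forall_setIntegral_eq hm (hint hf)
    (fun s _ _ => (hint (integrable_condExp.congr hfg.symm)).integrableOn)
    (fun s hs _ => ?_) hg.aestronglyMeasurable
  rw [restrict_withDensity (hm s hs), integral_withDensity_eq_integral_toReal_smul hwm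
    (ae_restrict_of_ae hw_lt_top), integral_withDensity_eq_integral_toReal_smul hwm
    (ae_restrict_of_ae hw_lt_top)]
  calc ∫ ω in s, (w ω).toReal • g ω ∂μ
      = ∫ ω in s, (w ω).toReal * μ[f | m] ω ∂μ :=
        setIntegral_congr_ae (hm s hs) (hfg.mono fun ω hω _ => by rw [smul_eq_mul, hω])
    _ = ∫ ω in s, μ[fun ω => (w ω).toReal * f ω | m] ω ∂μ :=
        setIntegral_congr_ae (hm s hs) (hpull.mono fun ω hω _ => hω.symm)
    _ = ∫ ω in s, (w ω).toReal • f ω ∂μ := setIntegral_condExp hm hwf hs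

theorem MeasureTheory.Measure.map_withDensity_comp {Ω E : Type*} [MeasurableSpace Ω]
    [MeasurableSpace E] {μ : Measure Ω} {f : Ω → E} (hf : Measurable f) {ρ : E → ℝ≥0∞}
    (hρ : Measurable ρ) : (μ.withDensity (ρ ∘ f)).map f = (μ.map f).withDensity ρ := by
  ext s hs
  rw [Measure.map_apply hf hs, withDensity_apply _ (hf hs), withDensity_apply _ hs,
    setLIntegral_map hs hρ hf, Function.comp_def]

theorem ProbabilityTheory.cond_eq_withDensity_indicator {Ω : Type*} [MeasurableSpace Ω]
    (μ : Measure Ω) {s : Set Ω} (hs : MeasurableSet s) :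
    μ[|s] = μ.withDensity (s.indicator fun _ => (μ s)⁻¹) := by
  rw [withDensity_indicator hs, withDensity_const, cond]

theorem exists_density_isProbabilityMeasure_lintegral_lt_top {E : Type*} [MeasurableSpace E]
    (ν : Measure E) [IsProbabilityMeasure ν] {V : E → ℝ≥0∞} (hV : Measurable V)
    (hV_ne_top : ∀ x, V x ≠ ∞) :
    ∃ ρ : E → ℝ≥0∞, Measurable ρ ∧ (∀ x, ρ x ≠ 0) ∧ (∃ C ≠ ∞, ∀ x, ρ x ≤ C) ∧
      IsProbabilityMeasure (ν.withDensity ρ) ∧ ∫⁻ x, V x ∂ν.withDensity ρ < ∞ := by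
  set w : E → ℝ≥0∞ := fun x => (1 + V x)⁻¹
  have hw : Measurable w := (hV.const_add 1).inv
  have h1V : ∀ x, 1 + V x ≠ ∞ := fun x => ENNReal.add_ne_top.2 ⟨ENNReal.one_ne_top, hV_ne_top x⟩
  have hw1 : ∀ x, w x ≤ 1 := fun x => ENNReal.inv_le_one.2 le_self_add
  have hwV : ∀ x, w x * V x ≤ 1 := fun x => by
    rw [ENNReal.inv_mul_le_iff (by simp) (h1V x), mul_one]
    exact le_add_self
  set Z := ∫⁻ x, w x ∂ν
  have hZ0 : Z ≠ 0 := fun h =>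
    ((lintegral_eq_zero_iff hw).1 h).exists.elim fun x => ENNReal.inv_ne_zero.2 (h1V x)
  have hZ_ne_top : Z ≠ ∞ :=
    ((lintegral_mono hw1).trans_eq (by simp) : Z ≤ 1).trans_lt ENNReal.one_lt_top |>.ne
  refine ⟨fun x => Z⁻¹ * w x, hw.const_mul _,
    fun x => mul_ne_zero (ENNReal.inv_ne_zero.2 hZ_ne_top) (ENNReal.inv_ne_zero.2 (h1V x)),
    ⟨Z⁻¹, ENNReal.inv_ne_top.2 hZ0, fun x => mul_le_of_le_one_right' (hw1 x)⟩, ⟨?_⟩, ?_⟩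
  · rw [withDensity_apply _ .univ, Measure.restrict_univ, lintegral_const_mul _ hw,
      ENNReal.inv_mul_cancel hZ0 hZ_ne_top]
  · rw [lintegral_withDensity_eq_lintegral_mul _ (hw.const_mul _) hV]
    calc ∫⁻ x, Z⁻¹ * w x * V x ∂ν ≤ ∫⁻ _, Z⁻¹ ∂ν :=
          lintegral_mono fun x => by rw [mul_assoc]; exact mul_le_of_le_one_right' (hwV x)
      _ < ∞ := by simpa [pos_iff_ne_zero] using hZ0

theorem MeasureTheory.tendsto_measure_setOf_lt_atTop {E : Type*} [MeasurableSpace E]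
    (ν : Measure E) [IsFiniteMeasure ν] {V : E → ℝ} (hV : Measurable V) :
    Tendsto (fun K : ℕ => ν {x | (K : ℝ) < V x}) atTop (𝓝 0) := by
  have hanti : Antitone fun K : ℕ => {x | (K : ℝ) < V x} :=
    fun K K' hKK' x (hx : (K' : ℝ) < V x) => (Nat.mono_cast hKK').trans_lt hx
  have h := tendsto_measure_iInter_atTop (μ := ν)
    (fun K : ℕ => (measurableSet_lt measurable_const hV).nullMeasurableSet) hanti
    ⟨0, measure_ne_top _ _⟩
  have hempty : ⋂ K : ℕ, {x | (K : ℝ) < V x} = ∅ :=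
    Set.eq_empty_of_forall_notMem fun x hx =>
      (exists_nat_ge (V x)).elim fun K hK => (Set.mem_iInter.1 hx K).not_ge hK
  rwa [hempty, measure_empty] at h

theorem aemeasurable_of_aestronglyMeasurable_arctan_add {Ω : Type*} [MeasurableSpace Ω]
    {μ : Measure Ω} {Y : Ω → ℝ} (c : ℝ)
    (h : AEStronglyMeasurable (fun ω => Real.arctan (Y ω) + c) μ) : AEMeasurable Y μ := by
  have htan : Measurable fun z : ℝ => Real.tan (z - c) := by
    simp only [Real.tan_eq_sin_div_cos]
    fun_prop
  simpa [Function.comp_def, Real.tan_arctan] using htan.comp_aemeasurable h.aemeasurable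

theorem abs_integral_sub_integral_cond_le {Ω : Type*} [MeasurableSpace Ω] {μ : Measure Ω}
    [IsProbabilityMeasure μ] {s : Set Ω} (hs : MeasurableSet s) {g : Ω → ℝ}
    (hg : AEStronglyMeasurable g μ) {C : ℝ} (hgC : ∀ ω, ‖g ω‖ ≤ C) :
    |∫ ω, g ω ∂μ - ∫ ω, g ω ∂μ[|s]| ≤ 2 * C * μ.real sᶜ := by
  have hint : Integrable g μ := .of_bound hg C (ae_of_all _ hgC)
  have hI : ∀ t, |∫ ω in t, g ω ∂μ| ≤ C * μ.real t := fun t => by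
    simpa only [Real.norm_eq_abs] using
      norm_setIntegral_le_of_norm_le_const_ae (measure_lt_top μ t) (ae_of_all _ hgC)
  have hI₁ := hI s
  have hI₂ := hI sᶜ
  have hsum : μ.real s + μ.real sᶜ = 1 := probReal_add_probReal_compl hs
  have hcond : ∫ ω, g ω ∂μ[|s] = (μ.real s)⁻¹ * ∫ ω in s, g ω ∂μ := by
    rw [ProbabilityTheory.cond, integral_smul_measure, ENNReal.toReal_inv]
    rfl
  rw [← integral_add_compl hs hint, hcond]
  set b := μ.real s
  set I₁ := ∫ ω in s, g ω ∂μ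
  set I₂ := ∫ ω in sᶜ, g ω ∂μ
  have hC : 0 ≤ C := by
    have : C * b + C * μ.real sᶜ = C := by rw [← mul_add, hsum, mul_one]
    linarith [abs_nonneg I₁, abs_nonneg I₂]
  -- When `b = 0` we have `b⁻¹ = 0` and `I₁ = 0`, so both facts still hold.
  have hI₁b : I₁ = b * (b⁻¹ * I₁) ∧ |b⁻¹ * I₁| ≤ C := by
    rcases eq_or_ne b 0 with hb | hb
    · have : I₁ = 0 := abs_nonpos_iff.1 (by simpa [hb] using hI₁)
      simp [this, hC]
    · have hb₀ : 0 < b := lt_of_le_of_ne measureReal_nonneg hb.symm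
      refine ⟨by field_simp, ?_⟩
      rw [abs_mul, abs_inv, abs_of_pos hb₀, inv_mul_le_iff₀ hb₀, mul_comm]
      exact hI₁
  calc |I₁ + I₂ - b⁻¹ * I₁| = |I₂ - μ.real sᶜ * (b⁻¹ * I₁)| := by
        congr 1
        linear_combination hI₁b.1 + (b⁻¹ * I₁) * hsum
    _ ≤ |I₂| + μ.real sᶜ * |b⁻¹ * I₁| :=
        (abs_sub _ _).trans_eq (by rw [abs_mul, abs_of_nonneg measureReal_nonneg])
    _ ≤ C * μ.real sᶜ + μ.real sᶜ * C := by gcongr; exact hI₁b.2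
    _ = 2 * C * μ.real sᶜ := by ring

namespace Paper

variable {E Ω : Type*} [MeasurableSpace E] [MeasurableSpace Ω]
  {Pr : Measure Ω} {X : ℕ → Ω → E} {ν₁ : Measure E} {P : Kernel E E}
  {Y : ℕ → Ω → ℝ} {G : Measure ℝ}

theorem IsMarkovChain.isProbabilityMeasure [IsProbabilityMeasure ν₁]
    (hX : IsMarkovChain Pr X ν₁ P) : IsProbabilityMeasure Pr := by
  constructor
  rw [← Set.preimage_univ (f := X 0), ← Measure.map_apply (hX.1 0) .univ, hX.2.1, measure_univ]

theorem IsMarkovChain.withDensity [IsFiniteMeasure Pr] (hX : IsMarkovChain Pr X ν₁ P)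
    {ρ : E → ℝ≥0∞} (hρ : Measurable ρ) {C : ℝ≥0∞} (hC : C ≠ ∞) (hρC : ∀ x, ρ x ≤ C) :
    IsMarkovChain (Pr.withDensity (ρ ∘ X 0)) X (ν₁.withDensity ρ) P := by
  refine ⟨hX.1, by rw [Measure.map_withDensity_comp (hX.1 0) hρ, hX.2.1], fun i A hA => ?_⟩
  set past : Ω → Fin (i + 1) → E := fun ω j => X j.1 ω
  have hpast : ∀ j : Fin (i + 1),
      Measurable[MeasurableSpace.comap past MeasurableSpace.pi] (X j) := fun j =>
    (measurable_pi_apply j).comp (comap_measurable past)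
  have hm : MeasurableSpace.comap past MeasurableSpace.pi ≤ ‹MeasurableSpace Ω› :=
    (measurable_pi_lambda past fun j => hX.1 j).comap_le
  have hind : Integrable (fun ω => A.indicator (fun _ => (1 : ℝ)) (X (i + 1) ω)) Pr :=
    .of_bound ((measurable_const.indicator hA).comp (hX.1 (i + 1))).aestronglyMeasurable 1
      (ae_of_all _ fun ω => by
        by_cases h : X (i + 1) ω ∈ A <;> simp [h])
  exact ae_eq_condExp_withDensity hm (hρ.comp (hpast 0)) hC (fun ω => hρC _) hind
    ((P.measurable_coe hA).comp (hpast (Fin.last i))).ennreal_toReal.stronglyMeasurable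
    (hX.2.2 i A hA)

theorem IsMarkovChain.cond [IsFiniteMeasure Pr] (hX : IsMarkovChain Pr X ν₁ P) {S : Set E}
    (hS : MeasurableSet S) (hS0 : ν₁ S ≠ 0) : IsMarkovChain Pr[|X 0 ⁻¹' S] X ν₁[|S] P := by
  have hPrS : Pr (X 0 ⁻¹' S) = ν₁ S := by rw [← Measure.map_apply (hX.1 0) hS, hX.2.1]
  have hind : (X 0 ⁻¹' S).indicator (fun _ => (ν₁ S)⁻¹)
      = S.indicator (fun _ => (ν₁ S)⁻¹) ∘ X 0 := rfl
  rw [cond_eq_withDensity_indicator _ hS, cond_eq_withDensity_indicator _ (hX.1 0 hS), hPrS, hind]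
  exact hX.withDensity (measurable_const.indicator hS) (ENNReal.inv_ne_top.2 hS0)
    (Set.indicator_le_self' fun _ _ => bot_le)

theorem cid.eventually_aemeasurable [IsProbabilityMeasure G] (hY : cid Pr Y G) :
    ∀ᶠ N in atTop, AEMeasurable (Y N) Pr := by
  let F : BoundedContinuousFunction ℝ ℝ := .ofNormedAddCommGroup Real.arctan
    Real.continuous_arctan (Real.pi / 2) fun y =>
      abs_le.2 ⟨(Real.neg_pi_div_two_lt_arctan y).le, (Real.arctan_lt_pi_div_two y).le⟩
  by_contra h
  rw [not_eventually] at h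
  -- Frequently the integrals are junk zeros, so every limit `∫ (F + c) dG` would vanish.
  have hlim : ∀ c : ℝ, ∫ x, (F + .const ℝ c) x ∂G = 0 := fun c =>
    tendsto_nhds_unique_of_frequently_eq (hY _) tendsto_const_nhds <| h.mono fun N hN =>
      integral_undef fun hi => hN (aemeasurable_of_aestronglyMeasurable_arctan_add c hi.1)
  have hshift : ∀ c : ℝ, ∫ x, (F + .const ℝ c) x ∂G = ∫ x, F x ∂G + c := fun c => by
    simp only [BoundedContinuousFunction.coe_add, Pi.add_apply,
      BoundedContinuousFunction.const_apply]
    rw [integral_add (F.integrable G) (integrable_const c)]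
    simp
  have h0 := hlim 0
  have h1 := hlim 1
  rw [hshift] at h0 h1
  linarith

theorem cid_of_tendsto_cond [IsProbabilityMeasure Pr] {B : ℕ → Set Ω}
    (hB : ∀ K, MeasurableSet (B K)) (hBc : Tendsto (fun K => Pr (B K)ᶜ) atTop (𝓝 0))
    (hY : ∀ᶠ N in atTop, AEMeasurable (Y N) Pr) (hcond : ∀ᶠ K in atTop, cid Pr[|B K] Y G) :
    cid Pr Y G := by
  intro f
  rw [Metric.tendsto_atTop]
  intro ε hε
  have hsmall : Tendsto (fun K => 2 * ‖f‖ * Pr.real (B K)ᶜ) atTop (𝓝 0) := by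
    have := ((ENNReal.tendsto_toReal ENNReal.zero_ne_top).comp hBc).const_mul (2 * ‖f‖)
    rwa [ENNReal.toReal_zero, mul_zero] at this
  obtain ⟨K, hK, hKε⟩ := (hcond.and (hsmall.eventually (gt_mem_nhds (half_pos hε)))).exists
  obtain ⟨N₁, hN₁⟩ := Metric.tendsto_atTop.1 (hK f) (ε / 2) (half_pos hε)
  obtain ⟨N₂, hN₂⟩ := eventually_atTop.1 hY
  refine ⟨max N₁ N₂, fun N hN => ?_⟩
  have hclose := abs_integral_sub_integral_cond_le (hB K)
    (f.continuous.measurable.comp_aemeasurable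
      (hN₂ N (le_of_max_le_right hN))).aestronglyMeasurable fun ω => f.norm_coe_le_norm (Y N ω)
  calc dist (∫ ω, f (Y N ω) ∂Pr) (∫ x, f x ∂G)
      ≤ dist (∫ ω, f (Y N ω) ∂Pr) (∫ ω, f (Y N ω) ∂Pr[|B K])
        + dist (∫ ω, f (Y N ω) ∂Pr[|B K]) (∫ x, f x ∂G) := dist_triangle _ _ _
    _ < ε / 2 + ε / 2 :=
        add_lt_add_of_le_of_lt ((Real.dist_eq _ _).trans_le (hclose.trans hKε.le))
          (hN₁ N (le_of_max_le_left hN))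
    _ = ε := add_halves ε

end Paper

theorem stmt11_general {d : ℕ} (P : Kernel (Euc d) (Euc d))
    (V : Euc d → ℝ) (hVm : Measurable V)
    (U : Measure (Euc d) → ℝ) (μ : Measure (Euc d))
    (G : Measure ℝ) (hG : IsProbabilityMeasure G)
    (hyp : ∀ ν₁ : Measure (Euc d), IsProbabilityMeasure ν₁ →
      (∫⁻ x, ENNReal.ofReal (V x) ∂ν₁) < ⊤ →
      ∀ (Ω : Type) [MeasurableSpace Ω] (Pr : Measure Ω), IsProbabilityMeasure Pr →
      ∀ X : ℕ → Ω → Euc d, IsMarkovChain Pr X ν₁ P →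
        cid Pr (fun N ω => Real.sqrt N * (U (emp X N ω) - U μ)) G) :
    ∀ ν₁ : Measure (Euc d), IsProbabilityMeasure ν₁ →
      ∀ (Ω : Type) [MeasurableSpace Ω] (Pr : Measure Ω), IsProbabilityMeasure Pr →
      ∀ X : ℕ → Ω → Euc d, IsMarkovChain Pr X ν₁ P →
        cid Pr (fun N ω => Real.sqrt N * (U (emp X N ω) - U μ)) G := by
  intro ν₁ hν₁ Ω _ Pr hPr X hX
  obtain ⟨ρ, hρ, hρ0, ⟨C, hC, hρC⟩, hρν, hρV⟩ :=
    exists_density_isProbabilityMeasure_lintegral_lt_top ν₁ hVm.ennreal_ofReal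
      fun _ => ENNReal.ofReal_ne_top
  have hXρ := hX.withDensity hρ hC hρC
  have hY : ∀ᶠ N : ℕ in atTop,
      AEMeasurable (fun ω => Real.sqrt N * (U (emp X N ω) - U μ)) Pr :=
    (hyp _ hρν hρV Ω _ hXρ.isProbabilityMeasure X hXρ).eventually_aemeasurable.mono
      fun N hN => hN.mono_ac <| withDensity_absolutelyContinuous'
        (hρ.comp (hX.1 0)).aemeasurable (ae_of_all _ fun ω => hρ0 _)
  set S : ℕ → Set (Euc d) := fun K => {x | V x ≤ K}
  have hS : ∀ K, MeasurableSet (S K) := fun K => measurableSet_le hVm measurable_const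
  have hSc : Tendsto (fun K => ν₁ (S K)ᶜ) atTop (𝓝 0) := by
    simpa [S, Set.compl_ofPred, not_le] using tendsto_measure_setOf_lt_atTop ν₁ hVm
  have hPrS : ∀ K, Pr (X 0 ⁻¹' S K)ᶜ = ν₁ (S K)ᶜ := fun K => by
    rw [← Set.preimage_compl, ← Measure.map_apply (hX.1 0) (hS K).compl, hX.2.1]
  refine cid_of_tendsto_cond (fun K => hX.1 0 (hS K)) (by simpa only [hPrS] using hSc) hY ?_
  filter_upwards [hSc.eventually_lt_const zero_lt_one] with K hK
  have hS0 : ν₁ (S K) ≠ 0 := fun h =>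
    hK.ne (by rw [prob_compl_eq_one_sub (hS K), h, tsub_zero])
  have hXK := hX.cond (hS K) hS0
  have hνK := cond_isProbabilityMeasure (s := S K) hS0
  refine hyp _ hνK ?_ Ω _ hXK.isProbabilityMeasure X hXK
  calc ∫⁻ x, ENNReal.ofReal (V x) ∂ν₁[|S K]
        ≤ ∫⁻ _, ENNReal.ofReal K ∂ν₁[|S K] :=
        lintegral_mono_ae <| (ae_cond_mem (hS K)).mono fun x hx => ENNReal.ofReal_le_ofReal hx
    _ < ⊤ := by simp

/-- reduction of the CLT to initial laws integrating `V`. -/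
theorem stmt11 {d : ℕ} (P : Kernel (Euc d) (Euc d)) [IsMarkovKernel P]
    (V : Euc d → ℝ) (hVm : Measurable V) (hV0 : ∀ x, 0 ≤ V x)
    (U : Measure (Euc d) → ℝ) (μ : Measure (Euc d))
    (G : Measure ℝ) (hG : IsProbabilityMeasure G)
    (hyp : ∀ ν₁ : Measure (Euc d), IsProbabilityMeasure ν₁ →
      (∫⁻ x, ENNReal.ofReal (V x) ∂ν₁) < ⊤ →
      ∀ (Ω : Type) [MeasurableSpace Ω] (Pr : Measure Ω), IsProbabilityMeasure Pr →
      ∀ X : ℕ → Ω → Euc d, IsMarkovChain Pr X ν₁ P →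
        cid Pr (fun N ω => Real.sqrt N * (U (emp X N ω) - U μ)) G) :
    ∀ ν₁ : Measure (Euc d), IsProbabilityMeasure ν₁ →
      ∀ (Ω : Type) [MeasurableSpace Ω] (Pr : Measure Ω), IsProbabilityMeasure Pr →
      ∀ X : ℕ → Ω → Euc d, IsMarkovChain Pr X ν₁ P →
        cid Pr (fun N ω => Real.sqrt N * (U (emp X N ω) - U μ)) G :=
  stmt11_general P V hVm U μ G hG hyp
end
end

section
/- Let ℓ ≥ 0 and let (X_i)_{i≥1} be ℝ^d-valued random variables satisfying condition TX. Then the following Lindeberg-type condition holds: for every ε > 0, lim_{N→∞} (1/N) Σ_{i=1}^N E(|X_i|^ℓ · 1_{{|X_i|^ℓ > Nε}}) = 0. -/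
open MeasureTheory ProbabilityTheory Filter ENNReal Topology

noncomputable section

open Paper

/-!
Write `S i = E((|X_i|^ℓ - (i+1)^β) 1_{|X_i|^ℓ > (i+1)^β})`. Once `2 N^β ≤ N ε`, every `i < N` has
`(i+1)^β ≤ N ε / 2`, so on `{|X_i|^ℓ > N ε}` we get `|X_i|^ℓ ≤ 2 (|X_i|^ℓ - (i+1)^β)`. Hence the
Lindeberg average is at most `2 N⁻¹ ∑_{i<N} S i`, which tends to `0` by Kronecker's lemma since
condition TX says exactly that `∑ S i / (i+1) < ∞`.
-/

/-- Kronecker's lemma in `ℝ≥0∞`, by dominated convergence for the counting measure: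
`N⁻¹ S i ≤ (i + 1)⁻¹ S i` for `i < N`. -/
theorem ENNReal.tendsto_inv_mul_sum_range_of_tsum_inv_mul_ne_top (S : ℕ → ℝ≥0∞)
    (h : ∑' i : ℕ, ((i : ℝ≥0∞) + 1)⁻¹ * S i ≠ ⊤) :
    Tendsto (fun N : ℕ => (N : ℝ≥0∞)⁻¹ * ∑ i ∈ Finset.range N, S i) atTop (𝓝 0) := by
  let F : ℕ → ℕ → ℝ≥0∞ := fun N i => if i < N then (N : ℝ≥0∞)⁻¹ * S i else 0
  have hF (N : ℕ) : (N : ℝ≥0∞)⁻¹ * ∑ i ∈ Finset.range N, S i = ∫⁻ i, F N i ∂Measure.count := by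
    rw [lintegral_count, tsum_eq_sum (s := Finset.range N) fun i hi => if_neg (by simpa using hi),
      Finset.mul_sum]
    exact Finset.sum_congr rfl fun i hi => (if_pos (Finset.mem_range.mp hi)).symm
  have h_bound (N : ℕ) : F N ≤ fun i : ℕ => ((i : ℝ≥0∞) + 1)⁻¹ * S i := by
    intro i
    by_cases hi : i < N
    · simp only [F, if_pos hi]
      gcongr
      exact_mod_cast hi
    · simp [F, if_neg hi]
  have h_lim (i : ℕ) : Tendsto (F · i) atTop (𝓝 0) := by
    have hS : S i ≠ ⊤ := fun hS => h (ENNReal.tsum_eq_top_of_eq_top ⟨i, by simp [hS]⟩)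
    have h_tail : Tendsto (fun N : ℕ => (N : ℝ≥0∞)⁻¹ * S i) atTop (𝓝 0) := by
      simpa using ENNReal.Tendsto.mul_const ENNReal.tendsto_inv_nat_nhds_zero (Or.inr hS)
    refine h_tail.congr' ?_
    filter_upwards [eventually_gt_atTop i] with N hN
    exact (if_pos hN).symm
  simpa [hF] using tendsto_lintegral_of_dominated_convergence _ (fun _ => measurable_of_countable _)
    (fun N => Eventually.of_forall (h_bound N)) (by rwa [lintegral_count])
    (Eventually.of_forall h_lim)

theorem setLIntegral_ofReal_lt_le_two_mul {α : Type*} [MeasurableSpace α] {μ : Measure α}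
    {f : α → ℝ} (hf : Measurable f) {c t : ℝ} (hc : 0 ≤ c) (hct : 2 * c ≤ t) :
    ∫⁻ x in {x | t < f x}, ENNReal.ofReal (f x) ∂μ
      ≤ 2 * ∫⁻ x in {x | c < f x}, ENNReal.ofReal (f x - c) ∂μ := by
  have hsub : {x | t < f x} ⊆ {x | c < f x} := fun x (hx : t < f x) =>
    show c < f x by linarith
  calc ∫⁻ x in {x | t < f x}, ENNReal.ofReal (f x) ∂μ
      ≤ ∫⁻ x in {x | t < f x}, 2 * ENNReal.ofReal (f x - c) ∂μ := by
        refine setLIntegral_mono (by fun_prop) fun x (hx : t < f x) => ?_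
        rw [← ENNReal.ofReal_ofNat 2, ← ENNReal.ofReal_mul zero_le_two]
        exact ENNReal.ofReal_le_ofReal (by linarith)
    _ = 2 * ∫⁻ x in {x | t < f x}, ENNReal.ofReal (f x - c) ∂μ :=
        lintegral_const_mul _ (by fun_prop)
    _ ≤ 2 * ∫⁻ x in {x | c < f x}, ENNReal.ofReal (f x - c) ∂μ := by
        gcongr

theorem eventually_two_mul_rpow_le_mul {β ε : ℝ} (hβ : β < 1) (hε : 0 < ε) :
    ∀ᶠ N : ℕ in atTop, 2 * (N : ℝ) ^ β ≤ N * ε := by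
  have h : Tendsto (fun N : ℕ => (N : ℝ) ^ (1 - β) * ε) atTop atTop :=
    ((tendsto_rpow_atTop (by linarith)).comp tendsto_natCast_atTop_atTop).atTop_mul_const hε
  filter_upwards [h.eventually_ge_atTop 2, eventually_gt_atTop 0] with N hN hN0
  have hN0' : (0 : ℝ) < N := by exact_mod_cast hN0
  calc 2 * (N : ℝ) ^ β ≤ (N : ℝ) ^ (1 - β) * ε * (N : ℝ) ^ β := by gcongr
    _ = N * ε := by
        rw [mul_right_comm, ← Real.rpow_add hN0', sub_add_cancel, Real.rpow_one]

theorem stmt13_general {d : ℕ} (ℓ : ℝ)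
    {Ω : Type*} [MeasurableSpace Ω] (Pr : Measure Ω)
    (X : ℕ → Ω → Euc d) (hX : ∀ i, Measurable (X i))
    (hTX : TX Pr X ℓ) :
    ∀ ε > (0:ℝ), Tendsto (fun N : ℕ => (N : ℝ≥0∞)⁻¹ * ∑ i ∈ Finset.range N,
      ∫⁻ ω in {ω | (N : ℝ) * ε < ‖X i ω‖ ^ ℓ}, ENNReal.ofReal (‖X i ω‖ ^ ℓ) ∂Pr)
      atTop (𝓝 0) := by
  obtain ⟨β, hβ, hsum⟩ := hTX
  intro ε hε
  have hkron := ENNReal.Tendsto.const_mul (a := 2)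
    (ENNReal.tendsto_inv_mul_sum_range_of_tsum_inv_mul_ne_top _ hsum.ne) (Or.inr ofNat_ne_top)
  rw [mul_zero] at hkron
  refine tendsto_of_tendsto_of_tendsto_of_le_of_le' tendsto_const_nhds hkron
    (.of_forall fun _ => bot_le) ?_
  filter_upwards [eventually_two_mul_rpow_le_mul hβ.2 hε] with N hN
  rw [mul_left_comm 2, Finset.mul_sum _ _ 2]
  gcongr with i hi
  refine setLIntegral_ofReal_lt_le_two_mul ((hX i).norm.pow_const ℓ) (by positivity)
    (hN.trans' ?_)
  gcongr
  · exact hβ.1.le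
  · exact_mod_cast Finset.mem_range.mp hi

/-- TX implies the Lindeberg-type condition. -/
theorem stmt13 {d : ℕ} (ℓ : ℝ) (hℓ : 0 ≤ ℓ)
    {Ω : Type*} [MeasurableSpace Ω] (Pr : Measure Ω) [IsProbabilityMeasure Pr]
    (X : ℕ → Ω → Euc d) (hX : ∀ i, Measurable (X i))
    (hTX : TX Pr X ℓ) :
    ∀ ε > (0:ℝ), Tendsto (fun N : ℕ => (N : ℝ≥0∞)⁻¹ * ∑ i ∈ Finset.range N,
      ∫⁻ ω in {ω | (N : ℝ) * ε < ‖X i ω‖ ^ ℓ}, ENNReal.ofReal (‖X i ω‖ ^ ℓ) ∂Pr)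
      atTop (𝓝 0) :=
  stmt13_general ℓ Pr X hX hTX
end
end

section
/- Let ℓ > 0, n ∈ ℕ with n ≥ 2, and let φ : (ℝ^d)^n → ℝ be a symmetric continuous function with lim_{|x₁|→∞} sup_{(x₂,…,x_n)∈(ℝ^d)^{n−1}} |φ(x₁,x₂,…,x_n)| / ∏_{i=1}^n (1+|x_i|^{ℓ/2}) = 0. For μ̃ ∈ 𝒫_ℓ(ℝ^d) define δU/δm(μ̃,x₁) = n ∫_{(ℝ^d)^{n−1}} (φ(x₁,x₂,…,x_n) − φ(0,x₂,…,x_n)) μ̃(dx₂)⋯μ̃(dx_n). Then for every μ ∈ 𝒫_ℓ(ℝ^d) and every r > 0 there exists a finite constant D such that for all (μ̃, x₁) ∈ B(μ,r) × ℝ^d, |δU/δm(μ̃,x₁)| ≤ D(1+|x₁|^{ℓ/2}), where B(μ,r) is the W_ℓ-ball of radius r centered at μ. -/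
open MeasureTheory ProbabilityTheory Filter ENNReal Topology

noncomputable section

open Paper


/-- The linear functional derivative of the U-statistic functional associated to `φ`:
`δU/δm(m, x₁) = n ∫ (φ(x₁, rest) - φ(0, rest)) m^{⊗(n-1)}(drest)` with `n = k+1`. -/
def USderiv {d : ℕ} (k : ℕ) (φ : (Fin (k + 1) → Euc d) → ℝ) (m : Measure (Euc d))
    (x₁ : Euc d) : ℝ :=
  ((k : ℝ) + 1) *
    ∫ rest : Fin k → Euc d, (φ (Fin.cons x₁ rest) - φ (Fin.cons 0 rest))
      ∂(Measure.pi fun _ => m)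

/-! By symmetry, the decay of `φ` in one variable combined with compactness bounds `φ` globally
by `C ∏ᵢ (1 + |xᵢ|^{ℓ/2})`. Integrating this bound against `m^{⊗(n-1)}` gives
`|δU/δm(m, x₁)| ≤ n C (2 + |x₁|^{ℓ/2}) (∫ (1 + |y|^{ℓ/2}) m(dy))^{n-1}`, and since
`|y|^{ℓ/2} ≤ 1 + |y|^ℓ`, the last integral is controlled by the `ℓ`-th moment of `m`. On a
`W_ℓ`-ball these moments are uniformly bounded: along a near-optimal coupling `ρ` of `m` and `μ`,
`|x|^ℓ ≤ 2^ℓ (|y|^ℓ + |x - y|^ℓ)`. -/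

section SymmetricBound

variable {ι E : Type*} [Fintype ι] [NormedAddCommGroup E] [ProperSpace E]

theorem exists_abs_le_mul_prod_of_symmetric {f : (ι → E) → ℝ} (hf : Continuous f)
    (hsym : ∀ (e : Equiv.Perm ι) (x : ι → E), f (x ∘ e) = f x)
    {w : E → ℝ} (hw : ∀ y, 1 ≤ w y) (i₀ : ι) {c M : ℝ}
    (hM : ∀ x : ι → E, M ≤ ‖x i₀‖ → |f x| ≤ c * ∏ i, w (x i)) :
    ∃ C, 0 ≤ C ∧ ∀ x, |f x| ≤ C * ∏ i, w (x i) := by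
  classical
  obtain ⟨C₀, hC₀⟩ := (isCompact_univ_pi fun _ : ι => isCompact_closedBall (0 : E) M)
    |>.exists_bound_of_continuousOn hf.continuousOn
  refine ⟨|C₀| + |c|, by positivity, fun x => ?_⟩
  have hprod : 1 ≤ ∏ i, w (x i) := Finset.one_le_prod fun i _ => hw (x i)
  by_cases hfar : ∃ i, M ≤ ‖x i‖
  · obtain ⟨i, hi⟩ := hfar
    have hswap := hM (x ∘ Equiv.swap i₀ i) (by simpa using hi)
    rw [hsym, Function.comp_def, Equiv.prod_comp (Equiv.swap i₀ i) fun j => w (x j)] at hswap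
    calc |f x| ≤ c * ∏ i, w (x i) := hswap
      _ ≤ (|C₀| + |c|) * ∏ i, w (x i) :=
        mul_le_mul_of_nonneg_right (by linarith [le_abs_self c, abs_nonneg C₀]) (by linarith)
  · push Not at hfar
    have hx : x ∈ Set.univ.pi fun _ => Metric.closedBall (0 : E) M :=
      fun i _ => mem_closedBall_zero_iff.2 (hfar i).le
    calc |f x| ≤ |C₀| + |c| := (hC₀ x hx).trans (by linarith [le_abs_self C₀, abs_nonneg c])
      _ ≤ (|C₀| + |c|) * ∏ i, w (x i) := le_mul_of_one_le_right (by positivity) hprod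

end SymmetricBound

theorem abs_integral_pi_le_of_abs_le_prod {ι E : Type*} [Fintype ι] [MeasurableSpace E]
    (m : Measure E) [SigmaFinite m] {w : E → ℝ} (hw : Integrable w m) {g : (ι → E) → ℝ} {c : ℝ}
    (hg : ∀ x, |g x| ≤ c * ∏ i, w (x i)) :
    |∫ x, g x ∂Measure.pi fun _ => m| ≤ c * (∫ y, w y ∂m) ^ Fintype.card ι := by
  have hint : Integrable (fun x : ι → E => c * ∏ i, w (x i)) (Measure.pi fun _ => m) :=
    (Integrable.fintype_prod fun _ => hw).const_mul c
  calc |∫ x, g x ∂Measure.pi fun _ => m|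
      ≤ ∫ x, c * ∏ i, w (x i) ∂Measure.pi fun _ => m :=
        norm_integral_le_of_norm_le (f := g) hint (.of_forall hg)
    _ = c * (∫ y, w y ∂m) ^ Fintype.card ι := by
        rw [integral_const_mul, integral_fintype_prod_eq_pow (ι := ι) w]

theorem abs_USderiv_le {d k : ℕ} {φ : (Fin (k + 1) → Euc d) → ℝ} {w : Euc d → ℝ} {C : ℝ}
    (hφ : ∀ x, |φ x| ≤ C * ∏ i, w (x i)) (m : Measure (Euc d)) [SigmaFinite m]
    (hw : Integrable w m) (x₁ : Euc d) :
    |USderiv k φ m x₁| ≤ (k + 1) * (C * (w x₁ + w 0) * (∫ y, w y ∂m) ^ k) := by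
  have hdiff : ∀ rest : Fin k → Euc d, |φ (Fin.cons x₁ rest) - φ (Fin.cons 0 rest)| ≤
      C * (w x₁ + w 0) * ∏ i, w (rest i) := by
    intro rest
    have h₁ := hφ (Fin.cons x₁ rest)
    have h₀ := hφ (Fin.cons 0 rest)
    simp only [Fin.prod_univ_succ, Fin.cons_zero, Fin.cons_succ] at h₁ h₀
    linarith [abs_sub (φ (Fin.cons x₁ rest)) (φ (Fin.cons 0 rest))]
  rw [USderiv, abs_mul, abs_of_nonneg (by positivity)]
  gcongr
  simpa only [Fintype.card_fin] using abs_integral_pi_le_of_abs_le_prod m hw hdiff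

section Moments

variable {E : Type*} [MeasurableSpace E]

theorem exists_coupling_lintegral_lt_of_Wl_lt [PseudoMetricSpace E] {ℓ : ℝ} (hℓ : ℓ ≠ 0)
    {m μ : Measure E} {r : ℝ≥0∞} (h : Wl ℓ m μ < r) :
    ∃ ρ ∈ couplings m μ, ∫⁻ p, ENNReal.ofReal (dist p.1 p.2 ^ ℓ) ∂ρ < r ^ max ℓ 1 := by
  simp only [Wl, if_neg hℓ, iInf_lt_iff] at h
  obtain ⟨ρ, hρ, hlt⟩ := h
  have hpos : 0 < max ℓ 1 := lt_max_of_lt_right one_pos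
  refine ⟨ρ, hρ, ?_⟩
  simpa [one_div, ENNReal.rpow_inv_rpow hpos.ne'] using ENNReal.rpow_lt_rpow hlt hpos

variable [NormedAddCommGroup E] [OpensMeasurableSpace E]

theorem lintegral_rpow_norm_le_of_mem_couplings {ℓ : ℝ} (hℓ : 0 ≤ ℓ) {m μ : Measure E}
    {ρ : Measure (E × E)} (hρ : ρ ∈ couplings m μ) :
    ∫⁻ x, ENNReal.ofReal (‖x‖ ^ ℓ) ∂m ≤
      2 ^ ℓ * (∫⁻ y, ENNReal.ofReal (‖y‖ ^ ℓ) ∂μ +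
        ∫⁻ p, ENNReal.ofReal (dist p.1 p.2 ^ ℓ) ∂ρ) := by
  obtain ⟨-, hfst, hsnd⟩ := hρ
  have hmeas : Measurable fun x : E => ENNReal.ofReal (‖x‖ ^ ℓ) :=
    (measurable_norm.pow_const ℓ).ennreal_ofReal
  have hpt : ∀ p : E × E, ENNReal.ofReal (‖p.1‖ ^ ℓ) ≤
      2 ^ ℓ * (ENNReal.ofReal (‖p.2‖ ^ ℓ) + ENNReal.ofReal (dist p.1 p.2 ^ ℓ)) := by
    intro p
    simp only [← ENNReal.ofReal_rpow_of_nonneg (norm_nonneg _) hℓ,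
      ← ENNReal.ofReal_rpow_of_nonneg dist_nonneg hℓ]
    calc ENNReal.ofReal ‖p.1‖ ^ ℓ
        ≤ (ENNReal.ofReal ‖p.2‖ + ENNReal.ofReal (dist p.1 p.2)) ^ ℓ := by
          rw [← ENNReal.ofReal_add (norm_nonneg _) dist_nonneg]
          gcongr
          exact norm_le_norm_add_norm_sub' p.1 p.2 |>.trans_eq (by rw [dist_eq_norm])
      _ ≤ _ := ENNReal.add_rpow_le_two_rpow_mul_rpow_add_rpow _ _ hℓ
  calc ∫⁻ x, ENNReal.ofReal (‖x‖ ^ ℓ) ∂m = ∫⁻ p, ENNReal.ofReal (‖p.1‖ ^ ℓ) ∂ρ := by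
        rw [← hfst, lintegral_map hmeas measurable_fst]
    _ ≤ ∫⁻ p, 2 ^ ℓ * (ENNReal.ofReal (‖p.2‖ ^ ℓ) + ENNReal.ofReal (dist p.1 p.2 ^ ℓ)) ∂ρ :=
        lintegral_mono hpt
    _ = _ := by
        have hsnd_meas : Measurable fun p : E × E => ENNReal.ofReal (‖p.2‖ ^ ℓ) :=
          hmeas.comp measurable_snd
        rw [lintegral_const_mul' _ _ (by simp), lintegral_add_left hsnd_meas,
          ← hsnd, lintegral_map hmeas measurable_snd]

theorem lintegral_rpow_norm_le_of_mem_ball {ℓ : ℝ} (hℓ : 0 < ℓ) {m μ : Measure E} {r : ℝ}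
    (hm : m ∈ ball ℓ μ r) :
    ∫⁻ x, ENNReal.ofReal (‖x‖ ^ ℓ) ∂m ≤
      2 ^ ℓ * (∫⁻ y, ENNReal.ofReal (‖y‖ ^ ℓ) ∂μ + ENNReal.ofReal r ^ max ℓ 1) := by
  obtain ⟨ρ, hρ, hlt⟩ := exists_coupling_lintegral_lt_of_Wl_lt hℓ.ne' hm.2
  refine (lintegral_rpow_norm_le_of_mem_couplings hℓ.le hρ).trans ?_
  gcongr

theorem one_add_rpow_half_le (ℓ : ℝ) {t : ℝ} (ht : 0 ≤ t) : 1 + t ^ (ℓ / 2) ≤ 2 + t ^ ℓ := by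
  have hsq : t ^ ℓ = (t ^ (ℓ / 2)) ^ 2 := by
    rw [← Real.rpow_mul_natCast ht]; norm_num
  nlinarith [sq_nonneg (t ^ (ℓ / 2) - 1)]

theorem integrable_rpow_norm_of_lintegral_lt_top {ℓ : ℝ} {m : Measure E}
    (h : ∫⁻ x, ENNReal.ofReal (‖x‖ ^ ℓ) ∂m < ⊤) : Integrable (fun y : E => ‖y‖ ^ ℓ) m := by
  refine ⟨(measurable_norm.pow_const ℓ).aestronglyMeasurable, ?_⟩
  rwa [hasFiniteIntegral_iff_ofReal (.of_forall fun y => by positivity)]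

theorem integrable_one_add_rpow_half {ℓ : ℝ} {m : Measure E} [IsFiniteMeasure m]
    (h : Integrable (fun y : E => ‖y‖ ^ ℓ) m) :
    Integrable (fun y : E => 1 + ‖y‖ ^ (ℓ / 2)) m := by
  refine ((integrable_const 2).add h).mono'
    (measurable_const.add (measurable_norm.pow_const _)).aestronglyMeasurable (.of_forall ?_)
  intro y
  rw [Real.norm_of_nonneg (by positivity)]
  exact one_add_rpow_half_le ℓ (norm_nonneg y)

theorem integral_one_add_rpow_half_le {ℓ : ℝ} {m : Measure E} [IsProbabilityMeasure m]
    {B : ℝ≥0∞} (hB : B ≠ ⊤) (hm : ∫⁻ x, ENNReal.ofReal (‖x‖ ^ ℓ) ∂m ≤ B) :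
    ∫ y, (1 + ‖y‖ ^ (ℓ / 2)) ∂m ≤ 2 + B.toReal := by
  have hmeas : Measurable fun y : E => ‖y‖ ^ ℓ := measurable_norm.pow_const ℓ
  have hint := integrable_rpow_norm_of_lintegral_lt_top (hm.trans_lt hB.lt_top)
  have hmoment : ∫ y, ‖y‖ ^ ℓ ∂m ≤ B.toReal := by
    rw [integral_eq_lintegral_of_nonneg_ae (.of_forall fun y => by positivity)
      hmeas.aestronglyMeasurable]
    exact ENNReal.toReal_mono hB hm
  calc ∫ y, (1 + ‖y‖ ^ (ℓ / 2)) ∂m ≤ ∫ y, (2 + ‖y‖ ^ ℓ) ∂m :=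
        integral_mono (integrable_one_add_rpow_half hint) ((integrable_const 2).add hint)
          fun y => one_add_rpow_half_le ℓ (norm_nonneg y)
    _ = 2 + ∫ y, ‖y‖ ^ ℓ ∂m := by rw [integral_add (integrable_const 2) hint]; simp
    _ ≤ 2 + B.toReal := by gcongr

end Moments

theorem stmt16_general {d : ℕ} (ℓ : ℝ) (hℓ : 0 < ℓ) (k : ℕ)
    (φ : (Fin (k + 1) → Euc d) → ℝ) (hφc : Continuous φ)
    (hsym : ∀ (e : Equiv.Perm (Fin (k + 1))) (x : Fin (k + 1) → Euc d), φ (x ∘ e) = φ x)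
    (hlim : ∀ ε > (0:ℝ), ∃ M : ℝ, ∀ x : Fin (k + 1) → Euc d, M ≤ ‖x 0‖ →
      |φ x| ≤ ε * ∏ i, (1 + ‖x i‖ ^ (ℓ / 2)))
    (μ : Measure (Euc d)) (hμ : MemP ℓ μ) (r : ℝ) :
    ∃ D : ℝ, ∀ m ∈ ball ℓ μ r, ∀ x₁ : Euc d,
      |USderiv k φ m x₁| ≤ D * (1 + ‖x₁‖ ^ (ℓ / 2)) := by
  set w : Euc d → ℝ := fun y => 1 + ‖y‖ ^ (ℓ / 2) with hw_def
  have hw1 : ∀ y, 1 ≤ w y := fun y => le_add_of_nonneg_right (by positivity)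
  have hw0 : w 0 = 1 := by simp [hw_def, hℓ.ne']
  obtain ⟨M, hM⟩ := hlim 1 one_pos
  obtain ⟨C, hC0, hC⟩ := exists_abs_le_mul_prod_of_symmetric hφc hsym hw1 0 hM
  set B : ℝ≥0∞ := 2 ^ ℓ * (∫⁻ y, ENNReal.ofReal (‖y‖ ^ ℓ) ∂μ + ENNReal.ofReal r ^ max ℓ 1)
  have hB : B ≠ ⊤ := by
    have := hμ.2.ne
    finiteness
  refine ⟨(k + 1) * (C * 2 * (2 + B.toReal) ^ k), fun m hm x₁ => ?_⟩
  have : IsProbabilityMeasure m := hm.1.1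
  have hwm : Integrable w m :=
    integrable_one_add_rpow_half (integrable_rpow_norm_of_lintegral_lt_top hm.1.2)
  have hwm_le : ∫ y, w y ∂m ≤ 2 + B.toReal :=
    integral_one_add_rpow_half_le hB (lintegral_rpow_norm_le_of_mem_ball hℓ hm)
  calc |USderiv k φ m x₁| ≤ (k + 1) * (C * (w x₁ + w 0) * (∫ y, w y ∂m) ^ k) :=
        abs_USderiv_le hC m hwm x₁
    _ ≤ (k + 1) * (C * (2 * w x₁) * (2 + B.toReal) ^ k) := by
        have : 0 ≤ ∫ y, w y ∂m := integral_nonneg fun y => zero_le_one.trans (hw1 y)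
        gcongr
        linarith [hw1 x₁]
    _ = (k + 1) * (C * 2 * (2 + B.toReal) ^ k) * w x₁ := by ring

/-- RU2 for the U-statistic functional. -/
theorem stmt16 {d : ℕ} (ℓ : ℝ) (hℓ : 0 < ℓ) (k : ℕ) (hk : 1 ≤ k)
    (φ : (Fin (k + 1) → Euc d) → ℝ) (hφc : Continuous φ)
    (hsym : ∀ (e : Equiv.Perm (Fin (k + 1))) (x : Fin (k + 1) → Euc d), φ (x ∘ e) = φ x)
    (hlim : ∀ ε > (0:ℝ), ∃ M : ℝ, ∀ x : Fin (k + 1) → Euc d, M ≤ ‖x 0‖ →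
      |φ x| ≤ ε * ∏ i, (1 + ‖x i‖ ^ (ℓ / 2)))
    (μ : Measure (Euc d)) (hμ : MemP ℓ μ) (r : ℝ) (hr : 0 < r) :
    ∃ D : ℝ, ∀ m ∈ ball ℓ μ r, ∀ x₁ : Euc d,
      |USderiv k φ m x₁| ≤ D * (1 + ‖x₁‖ ^ (ℓ / 2)) :=
  stmt16_general ℓ hℓ k φ hφc hsym hlim μ hμ r
end
end
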